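/- arXiv:1405.0224 — 2 statements merged into one kernel-verified Lean document; each statement's English description precedes it below -/
import Mathlib

section
/- Let F be a closed subset of the complex plane ℂ. Then F is connected if and only if for each connected component U of the complement ℂ \ F, the topological boundary ∂U is connected. -/
open Complex Filter Topology Set Bornology OnePoint

/-- A transcendental entire function: differentiable on all of `ℂ` and not a polynomial. -/
def TranscendentalEntire (f : ℂ → ℂ) : Prop :=
  Differentiable ℂ f ∧ ¬ ∃ p : Polynomial ℂ, f = fun z => p.eval z

/-- The family `G` is normal on the set `U`: every sequence in `G` has a subsequence which
either converges locally uniformly on `U`, or diverges to `∞` uniformly on compact subsets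
of `U`. -/
def NormalOn (G : Set (ℂ → ℂ)) (U : Set ℂ) : Prop :=
  ∀ s : ℕ → (ℂ → ℂ), (∀ n, s n ∈ G) →
    ∃ φ : ℕ → ℕ, StrictMono φ ∧
      ((∃ f : ℂ → ℂ, TendstoLocallyUniformlyOn (fun n => s (φ n)) f atTop U) ∨
        (∀ K ⊆ U, IsCompact K → ∀ M : ℝ, ∀ᶠ n in atTop, ∀ z ∈ K, M ≤ ‖s (φ n) z‖))

/-- The Fatou set of a family of entire functions: the largest open set on which the
family is normal. -/
def FatouSet (G : Set (ℂ → ℂ)) : Set ℂ :=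
  {z | ∃ U : Set ℂ, IsOpen U ∧ z ∈ U ∧ NormalOn G U}

/-- The Fatou set of a single function: the Fatou set of the family of its iterates. -/
def FatouFn (g : ℂ → ℂ) : Set ℂ :=
  FatouSet {h | ∃ n : ℕ, 0 < n ∧ h = g^[n]}

/-! Components of an open subset of `ℂ` are open. If the closed set `F` splits into disjoint closed
pieces `A`, `B` while every boundary is connected, attach each component of `Fᶜ` to the piece
containing its boundary: this splits the plane into two disjoint nonempty closed sets.
Conversely, for a component `U` of `Fᶜ`, both `closure U` and `Uᶜ` are connected (the latter is
`F` together with the closures of the other components, each of which touches `F`) and they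
cover the plane. The plane is unicoherent, being simply connected, so `∂U = closure U ∩ Uᶜ` is
connected. -/

section Topology

variable {X : Type*} [TopologicalSpace X]

theorem IsPreconnected.subset_of_disjoint_frontier {s t : Set X} (hs : IsPreconnected s)
    (ht : IsOpen t) (hst : (s ∩ t).Nonempty) (hd : Disjoint s (frontier t)) : s ⊆ t := by
  refine hs.subset_left_of_subset_union ht isClosed_closure.isOpen_compl
    (disjoint_compl_right_iff_subset.mpr subset_closure) (fun x hx => ?_) hst
  have := hd.notMem_of_mem_left hx
  rw [mem_union, closure_eq_self_union_frontier, mem_compl_iff, mem_union]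
  tauto

theorem frontier_connectedComponentIn_compl_nonempty [PreconnectedSpace X] {F : Set X}
    (hF : F.Nonempty) {z : X} (hz : z ∈ Fᶜ) : (frontier (connectedComponentIn Fᶜ z)).Nonempty := by
  refine nonempty_frontier_iff.mpr ⟨⟨z, mem_connectedComponentIn hz⟩, fun h => ?_⟩
  obtain ⟨x, hx⟩ := hF
  exact absurd hx (connectedComponentIn_subset _ _ (h ▸ mem_univ x))

variable [LocallyConnectedSpace X] {F : Set X}

theorem frontier_connectedComponentIn_compl_subset (hF : IsClosed F) (z : X) :
    frontier (connectedComponentIn Fᶜ z) ⊆ F := by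
  rw [hF.isOpen_compl.connectedComponentIn.frontier_eq]
  rintro x ⟨hx, hxU⟩
  by_contra hxF
  obtain ⟨y, hyV, hyU⟩ := mem_closure_iff.mp hx _ hF.isOpen_compl.connectedComponentIn
    (mem_connectedComponentIn hxF)
  rw [connectedComponentIn_eq hyU, ← connectedComponentIn_eq hyV] at hxU
  exact hxU (mem_connectedComponentIn hxF)

theorem isClosed_inter_union_setOf_frontier_connectedComponentIn_subset (hF : IsClosed F)
    {C : Set X} (hC : IsClosed C) :
    IsClosed (F ∩ C ∪ {z | z ∈ Fᶜ ∧ frontier (connectedComponentIn Fᶜ z) ⊆ C}) := by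
  refine isClosed_of_closure_subset fun x hx => ?_
  by_cases hxF : x ∈ F
  · refine Or.inl ⟨hxF, ?_⟩
    by_contra hxC
    have hNC : connectedComponentIn Cᶜ x ⊆ Cᶜ := connectedComponentIn_subset _ _
    obtain ⟨y, hyN, hy⟩ := mem_closure_iff.mp hx _ hC.isOpen_compl.connectedComponentIn
      (mem_connectedComponentIn hxC)
    rcases hy with ⟨-, hyC⟩ | ⟨hyF, hyC⟩
    · exact hNC hyN hyC
    -- the component of `x` in `Cᶜ` meets the component of `y` in `Fᶜ` but not its frontier
    · have := isPreconnected_connectedComponentIn.subset_of_disjoint_frontier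
        hF.isOpen_compl.connectedComponentIn ⟨y, hyN, mem_connectedComponentIn hyF⟩
        (disjoint_compl_left.mono hNC hyC)
      exact connectedComponentIn_subset _ _ (this (mem_connectedComponentIn hxC)) hxF
  · obtain ⟨y, hyV, hy⟩ := mem_closure_iff.mp hx _ hF.isOpen_compl.connectedComponentIn
      (mem_connectedComponentIn hxF)
    rcases hy with ⟨hyF, -⟩ | ⟨-, hyC⟩
    · exact absurd hyF (connectedComponentIn_subset _ _ hyV)
    · exact Or.inr ⟨hxF, connectedComponentIn_eq hyV ▸ hyC⟩

theorem isConnected_of_isConnected_frontier_connectedComponentIn_compl [ConnectedSpace X]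
    (hF : IsClosed F) (h : ∀ z ∈ Fᶜ, IsConnected (frontier (connectedComponentIn Fᶜ z))) :
    IsConnected F := by
  have hsub := frontier_connectedComponentIn_compl_subset hF
  refine ⟨?_, ?_⟩
  · obtain ⟨z⟩ := ‹ConnectedSpace X›.toNonempty
    by_cases hz : z ∈ F
    · exact ⟨z, hz⟩
    · exact (h z hz).nonempty.mono (hsub z)
  rw [isPreconnected_iff_subset_of_fully_disjoint_closed hF]
  intro A B hA hB hFAB hAB
  have hside : ∀ z ∈ Fᶜ, frontier (connectedComponentIn Fᶜ z) ⊆ A ∨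
      frontier (connectedComponentIn Fᶜ z) ⊆ B := fun z hz =>
    (isPreconnected_iff_subset_of_fully_disjoint_closed isClosed_frontier).mp
      (h z hz).isPreconnected A B hA hB ((hsub z).trans hFAB) hAB
  have hcover := (isPreconnected_iff_subset_of_fully_disjoint_closed isClosed_univ).mp
    isPreconnected_univ _ _
    (isClosed_inter_union_setOf_frontier_connectedComponentIn_subset hF hA)
    (isClosed_inter_union_setOf_frontier_connectedComponentIn_subset hF hB)
    (fun x _ => ?_) (Set.disjoint_left.mpr ?_)
  · rcases hcover with h | h
    · exact Or.inl fun x hx => ((h (mem_univ x)).resolve_right fun h' => h'.1 hx).2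
    · exact Or.inr fun x hx => ((h (mem_univ x)).resolve_right fun h' => h'.1 hx).2
  · by_cases hxF : x ∈ F
    · exact (hFAB hxF).imp (fun hxA => Or.inl ⟨hxF, hxA⟩) fun hxB => Or.inl ⟨hxF, hxB⟩
    · exact (hside x hxF).imp (fun hA => Or.inr ⟨hxF, hA⟩) fun hB => Or.inr ⟨hxF, hB⟩
  · rintro x (⟨hxF, hxA⟩ | ⟨hxF, hxA⟩) (⟨hxF', hxB⟩ | ⟨hxF', hxB⟩)
    · exact hAB.notMem_of_mem_left hxA hxB
    · exact hxF' hxF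
    · exact hxF hxF'
    · obtain ⟨y, hy⟩ := (h x hxF).nonempty
      exact hAB.notMem_of_mem_left (hxA hy) (hxB hy)

theorem IsConnected.isPreconnected_compl_connectedComponentIn [PreconnectedSpace X]
    (hF : IsConnected F) (hFc : IsClosed F) (z : X) :
    IsPreconnected (connectedComponentIn Fᶜ z)ᶜ := by
  set U := connectedComponentIn Fᶜ z
  have hpiece : ∀ w ∈ Uᶜ, closure (connectedComponentIn Fᶜ w) ∪ F ⊆ Uᶜ := by
    intro w hw x hx hxU
    have hxF : x ∉ F := connectedComponentIn_subset _ _ hxU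
    rw [closure_eq_self_union_frontier, union_assoc,
      union_eq_right.mpr (frontier_connectedComponentIn_compl_subset hFc w)] at hx
    have hxw := hx.resolve_right hxF
    have hwU : connectedComponentIn Fᶜ w = U :=
      (connectedComponentIn_eq hxw).trans (connectedComponentIn_eq hxU).symm
    exact hw (hwU ▸ mem_connectedComponentIn (connectedComponentIn_nonempty_iff.mp ⟨x, hxw⟩))
  have hcover : Uᶜ = ⋃₀ ((fun w => closure (connectedComponentIn Fᶜ w) ∪ F) '' Uᶜ) := by
    refine Subset.antisymm (fun w hw => mem_sUnion_of_mem ?_ (mem_image_of_mem _ hw))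
      (sUnion_subset (forall_mem_image.mpr hpiece))
    by_cases hwF : w ∈ F
    · exact Or.inr hwF
    · exact Or.inl (subset_closure (mem_connectedComponentIn hwF))
  obtain ⟨x₀, hx₀⟩ := hF.nonempty
  rw [hcover]
  refine isPreconnected_sUnion x₀ _ (forall_mem_image.mpr fun w _ => Or.inr hx₀)
    (forall_mem_image.mpr fun w _ => ?_)
  by_cases hwF : w ∈ F
  · rw [connectedComponentIn_eq_empty (not_not_intro hwF), closure_empty, empty_union]
    exact hF.isPreconnected
  · obtain ⟨y, hy⟩ := frontier_connectedComponentIn_compl_nonempty hF.nonempty hwF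
    exact IsPreconnected.union y (frontier_subset_closure hy)
      (frontier_connectedComponentIn_compl_subset hFc w hy)
      isPreconnected_connectedComponentIn.closure hF.isPreconnected

end Topology

section Unicoherence

variable {X : Type*} [TopologicalSpace X]

theorem IsPreconnected.sub_eq_sub_of_exp_eq {S : Set X} (hS : IsPreconnected S) {g₁ g₂ : X → ℂ}
    (h₁ : ContinuousOn g₁ S) (h₂ : ContinuousOn g₂ S) (h : ∀ x ∈ S, exp (g₁ x) = exp (g₂ x))
    {x y : X} (hx : x ∈ S) (hy : y ∈ S) : g₁ x - g₂ x = g₁ y - g₂ y := by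
  refine hS.constant_of_mapsTo (T := (AddSubgroup.zmultiples (2 * Real.pi * I) : Set ℂ))
    (SetLike.isDiscrete_iff_discreteTopology.mpr inferInstance) (h₁.sub h₂) (fun z hz => ?_) hx hy
  have hz₁ : exp (g₁ z - g₂ z) = 1 := by rw [exp_sub, h z hz, div_self (exp_ne_zero _)]
  obtain ⟨n, hn⟩ := exp_eq_one_iff.mp hz₁
  exact AddSubgroup.mem_zmultiples_iff.mpr ⟨n, by rw [zsmul_eq_mul, Pi.sub_apply, hn]⟩

theorem Continuous.exists_continuous_exp_comp_eq [SimplyConnectedSpace X]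
    [LocallyPathConnectedSpace X] {f : X → ℂ} (hf : Continuous f) (hf₀ : ∀ x, f x ≠ 0) :
    ∃ g : X → ℂ, Continuous g ∧ exp ∘ g = f := by
  obtain ⟨x₀⟩ : Nonempty X := inferInstance
  obtain ⟨g, ⟨-, hg⟩, -⟩ := isCoveringMapOn_exp.existsUnique_continuousMap_lifts ⟨f, hf⟩
    (a₀ := x₀) (exp_log (hf₀ x₀)) hf₀
  exact ⟨g, g.continuous, hg⟩

/-- Were `A ∩ B = P ∪ Q` split by an Urysohn function `u` (`0` on `P`, `1` on `Q`),
the map equal to `exp (π i u)` on `A` and `exp (-π i u)` on `B` would have a continuous logarithm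
`g`; then `g - π i u` is constant on `A` and `g + π i u` on `B`, which is absurd on `P` and `Q`. -/
theorem IsPreconnected.inter_of_isClosed_of_union_eq_univ [SimplyConnectedSpace X]
    [LocallyPathConnectedSpace X] [NormalSpace X] {A B : Set X} (hA : IsPreconnected A)
    (hB : IsPreconnected B) (hAc : IsClosed A) (hBc : IsClosed B) (hAB : A ∪ B = univ) :
    IsPreconnected (A ∩ B) := by
  classical
  rw [isPreconnected_iff_subset_of_fully_disjoint_closed (hAc.inter hBc)]
  intro P Q hP hQ hPQ hdisj
  by_contra! h
  obtain ⟨p, hp, hpQ⟩ := not_subset.mp h.2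
  obtain ⟨q, hq, hqP⟩ := not_subset.mp h.1
  obtain ⟨u, hu₀, hu₁, -⟩ := exists_continuous_zero_one_of_isClosed hP hQ hdisj
  set θ : X → ℂ := fun x => Real.pi * I * u x
  have hθ : Continuous θ := by fun_prop
  have hθ_inter : ∀ x ∈ A ∩ B, exp (θ x) = exp (-θ x) := by
    intro x hx
    rcases hPQ hx with hxP | hxQ
    · simp [θ, hu₀ hxP]
    · simp [θ, hu₁ hxQ, exp_neg, exp_pi_mul_I]
  have hfrontier : frontier A ⊆ A ∩ B := by
    refine subset_inter hAc.frontier_subset ?_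
    rw [← frontier_compl, ← hBc.closure_eq]
    exact frontier_subset_closure.trans
      (closure_mono fun x hx => (hAB ▸ mem_univ x).resolve_left hx)
  set f : X → ℂ := fun x => if x ∈ A then exp (θ x) else exp (-θ x)
  have hf : Continuous f :=
    Continuous.if (fun x hx => hθ_inter x (hfrontier hx)) (by fun_prop) (by fun_prop)
  obtain ⟨g, hg, hgf⟩ := hf.exists_continuous_exp_comp_eq fun x => by
    dsimp only [f]; split_ifs <;> exact exp_ne_zero _
  have hfA : ∀ x ∈ A, exp (g x) = exp (θ x) := fun x hx => by
    rw [← Function.comp_apply (f := exp), hgf]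
    exact if_pos hx
  have hfB : ∀ x ∈ B, exp (g x) = exp (-θ x) := fun x hx => by
    rw [← Function.comp_apply (f := exp), hgf]
    by_cases hxA : x ∈ A
    · exact (if_pos hxA).trans (hθ_inter x ⟨hxA, hx⟩)
    · exact if_neg hxA
  have hconstA := hA.sub_eq_sub_of_exp_eq hg.continuousOn hθ.continuousOn hfA hp.1 hq.1
  have hconstB := hB.sub_eq_sub_of_exp_eq hg.continuousOn hθ.neg.continuousOn hfB hp.2 hq.2
  simp only [θ, Pi.neg_apply, hu₀ ((hPQ hp).resolve_right hpQ),
    hu₁ ((hPQ hq).resolve_left hqP), Pi.zero_apply, Pi.one_apply, ofReal_zero, ofReal_one,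
    mul_zero, mul_one] at hconstA hconstB
  have : (Real.pi : ℂ) * I = 0 := by linear_combination (hconstA - hconstB) / 2
  simp [Real.pi_ne_zero] at this

end Unicoherence

/-- A closed subset of `ℂ` is connected iff each component of the complement has
connected boundary. -/
theorem closed_connected_iff_boundaries_connected (F : Set ℂ) (hF : IsClosed F) :
    IsConnected F ↔
      ∀ z ∈ Fᶜ, IsConnected (frontier (connectedComponentIn Fᶜ z)) := by
  refine ⟨fun hFc z hz => ?_, isConnected_of_isConnected_frontier_connectedComponentIn_compl hF⟩
  have hU : IsOpen (connectedComponentIn Fᶜ z) := hF.isOpen_compl.connectedComponentIn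
  refine ⟨frontier_connectedComponentIn_compl_nonempty hFc.nonempty hz, ?_⟩
  rw [hU.frontier_eq, sdiff_eq]
  refine isPreconnected_connectedComponentIn.closure.inter_of_isClosed_of_union_eq_univ
    (hFc.isPreconnected_compl_connectedComponentIn hF z) isClosed_closure hU.isClosed_compl ?_
  rw [← univ_subset_iff, ← union_compl_self]
  exact union_subset_union_left _ subset_closure
end

section
/- Let G be a transcendental semigroup. If some g₀ ∈ G has the property that every component of F(g₀) is bounded, then the Fatou exceptional value set FV(G) is contained in J(G); i.e., no Fatou exceptional value of G lies in F(G). -/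
open Complex Filter Topology Set Bornology OnePoint

/-!
Suppose `w ∈ F(G)` has a finite backward orbit. Then `w ∈ F(g₀)`; let `U` be its component.
As `F(g₀)` is backward invariant, each component of `g₀⁻¹(U)` lies in a (bounded) component of
`F(g₀)`, and since `g₀` is an open map the image of such a component is open and relatively
closed in `U`, hence all of `U`: every component contains a preimage of `w`. So `g₀⁻¹(U)` is a
finite union of bounded sets, i.e. `g₀` stays away from `w` near `∞`. Then
`1 / (g₀(1/ζ) - w)` has a removable singularity of finite order at `0`, so `g₀` has polynomial
growth and, by Cauchy's estimates, is a polynomial.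
-/

open Nat in
theorem Differentiable.exists_polynomial_of_isBigO_pow {f : ℂ → ℂ} (hf : Differentiable ℂ f)
    {d : ℕ} (h : f =O[cobounded ℂ] (· ^ d)) : ∃ p : Polynomial ℂ, f = fun z => p.eval z := by
  obtain ⟨C, hC⟩ := h.bound
  obtain ⟨R₀, -, hR₀⟩ := (hasBasis_cobounded_norm (E := ℂ)).eventually_iff.mp hC
  have hderiv : ∀ n, d < n → iteratedDeriv n f 0 = 0 := by
    intro n hn
    have hcauchy : ∀ᶠ R in atTop, ‖iteratedDeriv n f 0‖ ≤ n ! * C * (R ^ d / R ^ n) := by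
      filter_upwards [eventually_gt_atTop (max R₀ 0)] with R hR
      have hR0 : 0 < R := (le_max_right _ _).trans_lt hR
      refine (norm_iteratedDeriv_le_of_forall_mem_sphere_norm_le (C := C * R ^ d) n hR0
        hf.diffContOnCl fun z hz => ?_).trans_eq (by ring)
      rw [mem_sphere_zero_iff_norm] at hz
      simpa [hz] using hR₀ (hz ▸ (le_max_left _ _).trans hR.le : R₀ ≤ ‖z‖)
    have hlim : Tendsto (fun R : ℝ => n ! * C * (R ^ d / R ^ n)) atTop (𝓝 0) := by
      simpa using (tendsto_pow_div_pow_atTop_zero hn).const_mul ((n ! : ℝ) * C)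
    exact norm_le_zero_iff.mp (ge_of_tendsto hlim hcauchy)
  refine ⟨∑ n ∈ Finset.range (d + 1), Polynomial.C ((n ! : ℂ)⁻¹ * iteratedDeriv n f 0) *
    Polynomial.X ^ n, funext fun z => ?_⟩
  rw [← taylorSeries_eq_of_entire' 0 z hf, tsum_eq_sum (s := Finset.range (d + 1))]
  · simp [Polynomial.eval_finsetSum]
  · intro n hn
    simp [hderiv n (by simpa using hn)]

theorem exists_analyticAt_eq_of_ne_of_isBoundedUnder {F : ℂ → ℂ} {c : ℂ}
    (hd : ∀ᶠ z in 𝓝[≠] c, DifferentiableAt ℂ F z)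
    (hb : IsBoundedUnder (· ≤ ·) (𝓝[≠] c) fun z => ‖F z‖) :
    ∃ G : ℂ → ℂ, AnalyticAt ℂ G c ∧ ∀ z ≠ c, G z = F z := by
  rw [eventually_nhdsWithin_iff] at hd
  have hdiff : DifferentiableOn ℂ F ({z | z ≠ c → DifferentiableAt ℂ F z} \ {c}) :=
    fun z hz => (hz.1 hz.2).differentiableWithinAt
  have hb' : IsBoundedUnder (· ≤ ·) (𝓝[≠] c) fun z => ‖F z - F c‖ := by
    obtain ⟨B, hB⟩ := hb
    exact isBoundedUnder_of_eventually_le (a := B + ‖F c‖)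
      ((eventually_map.mp hB).mono fun z hz => norm_sub_le_of_le hz le_rfl)
  refine ⟨_, (differentiableOn_update_limUnder_of_isLittleO hd hdiff
    hb'.isLittleO_sub_self_inv).analyticAt hd, fun z hz => Function.update_of_ne hz _ _⟩

theorem AnalyticAt.exists_eventually_mul_pow_le_norm {G : ℂ → ℂ} {c : ℂ} (hG : AnalyticAt ℂ G c)
    (hG₀ : ∃ᶠ z in 𝓝 c, G z ≠ 0) :
    ∃ m : ℕ, ∃ C > 0, ∀ᶠ z in 𝓝 c, C * ‖z - c‖ ^ m ≤ ‖G z‖ := by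
  have hord : analyticOrderAt G c ≠ ⊤ := fun htop =>
    hG₀ (by simpa using analyticOrderAt_eq_top.mp htop)
  obtain ⟨m, hm⟩ := WithTop.ne_top_iff_exists.mp hord
  obtain ⟨g, hg, hgc, hGg⟩ := (hG.analyticOrderAt_eq_natCast (n := m)).mp hm.symm
  have hg_near : ∀ᶠ z in 𝓝 c, ‖g c‖ / 2 < ‖g z‖ :=
    hg.continuousAt.norm.eventually_const_lt (half_lt_self (norm_pos_iff.mpr hgc))
  refine ⟨m, ‖g c‖ / 2, by positivity, ?_⟩
  filter_upwards [hGg, hg_near] with z hz hgz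
  rw [hz, norm_smul, norm_pow, mul_comm]
  gcongr

theorem Differentiable.exists_polynomial_of_eventually_le_norm_sub {f : ℂ → ℂ}
    (hf : Differentiable ℂ f) {w : ℂ} {r : ℝ} (hr : 0 < r)
    (hfar : ∀ᶠ z in cobounded ℂ, r ≤ ‖f z - w‖) :
    ∃ p : Polynomial ℂ, f = fun z => p.eval z := by
  set F : ℂ → ℂ := fun ζ => (f ζ⁻¹ - w)⁻¹
  have hfar₀ : ∀ᶠ ζ in 𝓝[≠] 0, r ≤ ‖f ζ⁻¹ - w‖ := tendsto_inv₀_nhdsNE_zero.eventually hfar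
  have hne : ∀ {z}, r ≤ ‖f z - w‖ → f z - w ≠ 0 := fun hz h0 => by
    rw [h0, norm_zero] at hz; linarith
  have hd : ∀ᶠ ζ in 𝓝[≠] 0, DifferentiableAt ℂ F ζ := by
    filter_upwards [hfar₀, self_mem_nhdsWithin] with ζ hζ hζ0
    exact ((hf.differentiableAt.comp ζ (differentiableAt_inv hζ0)).sub_const w).inv (hne hζ)
  have hb : IsBoundedUnder (· ≤ ·) (𝓝[≠] 0) fun ζ => ‖F ζ‖ :=
    isBoundedUnder_of_eventually_le (a := r⁻¹) <| hfar₀.mono fun ζ hζ => by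
      simpa [F] using inv_anti₀ hr hζ
  obtain ⟨G, hG, hGF⟩ := exists_analyticAt_eq_of_ne_of_isBoundedUnder hd hb
  have hG₀ : ∃ᶠ ζ in 𝓝 0, G ζ ≠ 0 := by
    refine (Eventually.frequently (f := 𝓝[≠] (0 : ℂ)) ?_).filter_mono nhdsWithin_le_nhds
    filter_upwards [hfar₀, self_mem_nhdsWithin] with ζ hζ hζ0
    simpa [hGF ζ hζ0, F] using hne hζ
  obtain ⟨m, C, hC, hlow⟩ := hG.exists_eventually_mul_pow_le_norm hG₀
  have hgrowth : (fun z => f z - w) =O[cobounded ℂ] (· ^ m) := by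
    refine Asymptotics.IsBigO.of_bound C⁻¹ ?_
    filter_upwards [tendsto_inv₀_cobounded.eventually hlow, hfar,
      eventually_ne_cobounded (0 : ℂ)] with z hz hzw hz0
    rw [hGF _ (inv_ne_zero hz0)] at hz
    have hpos : 0 < ‖f z - w‖ := hr.trans_le hzw
    simp only [F, inv_inv, sub_zero, norm_inv, inv_pow] at hz
    rw [norm_pow, le_inv_mul_iff₀ hC]
    rwa [← div_eq_mul_inv, div_le_iff₀ (by positivity), inv_mul_eq_div, le_div_iff₀ hpos] at hz
  obtain ⟨p, hp⟩ := (hf.sub_const w).exists_polynomial_of_isBigO_pow hgrowth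
  exact ⟨p + Polynomial.C w, funext fun z => by simp [← congrFun hp z]⟩

theorem TranscendentalEntire.isOpenMap {f : ℂ → ℂ} (hf : TranscendentalEntire f) :
    IsOpenMap f :=
  (analyticOnNhd_univ_iff_differentiable.mpr hf.1).is_constant_or_isOpenMap.resolve_left
    fun ⟨v, hv⟩ => hf.2 ⟨Polynomial.C v, funext fun z => by simp [hv]⟩

theorem TranscendentalEntire.not_isBounded_preimage {f : ℂ → ℂ} (hf : TranscendentalEntire f)
    {w : ℂ} {U : Set ℂ} (hU : U ∈ 𝓝 w) : ¬ IsBounded (f ⁻¹' U) := by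
  intro hbd
  obtain ⟨r, hr, hball⟩ := Metric.mem_nhds_iff.mp hU
  have hfar : ∀ᶠ z in cobounded ℂ, r ≤ ‖f z - w‖ := by
    filter_upwards [isBounded_def.mp hbd] with z hz
    by_contra! h
    exact hz (hball (mem_ball_iff_norm.mpr h))
  exact hf.2 (hf.1.exists_polynomial_of_eventually_le_norm_sub hr hfar)

theorem NormalOn.mono {G H : Set (ℂ → ℂ)} {U : Set ℂ} (hH : NormalOn H U) (hGH : G ⊆ H) :
    NormalOn G U :=
  fun s hs => hH s fun n => hGH (hs n)

theorem normalOn_singleton (f : ℂ → ℂ) (U : Set ℂ) : NormalOn {f} U := by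
  intro s hs
  obtain rfl : s = fun _ => f := funext hs
  exact ⟨id, strictMono_id, Or.inl ⟨f, fun u hu x hx =>
    ⟨U, self_mem_nhdsWithin, Eventually.of_forall fun _ _ _ => refl_mem_uniformity hu⟩⟩⟩

theorem NormalOn.union {A B : Set (ℂ → ℂ)} {U : Set ℂ} (hA : NormalOn A U) (hB : NormalOn B U) :
    NormalOn (A ∪ B) U := by
  intro s hs
  wlog hinf : {n | s n ∈ A}.Infinite generalizing A B
  · refine this hB hA (fun n => (hs n).symm) ?_
    exact (Set.Finite.infinite_compl (not_infinite.mp hinf)).mono fun n hn => (hs n).resolve_left hn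
  obtain ⟨φ, hφ, h⟩ := hA (fun n => s (Nat.nth (fun n => s n ∈ A) n))
    (Nat.nth_mem_of_infinite hinf)
  exact ⟨_, (Nat.nth_strictMono hinf).comp hφ, h⟩

theorem NormalOn.precomp {H : Set (ℂ → ℂ)} {U : Set ℂ} (hH : NormalOn H U) {f : ℂ → ℂ}
    (hf : Continuous f) : NormalOn ((· ∘ f) '' H) (f ⁻¹' U) := by
  intro s hs
  choose t ht hts using hs
  obtain ⟨φ, hφ, ⟨g, hg⟩ | hdiv⟩ := hH t ht
  · refine ⟨φ, hφ, Or.inl ⟨g ∘ f, ?_⟩⟩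
    simpa only [← hts] using hg.comp f (mapsTo_preimage f U) hf.continuousOn
  · refine ⟨φ, hφ, Or.inr fun K hK hKc M => ?_⟩
    filter_upwards [hdiv (f '' K) (image_subset_iff.mpr hK) (hKc.image hf) M] with n hn z hz
    simpa only [← hts, Function.comp_apply] using hn (f z) (mem_image_of_mem f hz)

theorem isOpen_fatouSet (G : Set (ℂ → ℂ)) : IsOpen (FatouSet G) :=
  isOpen_iff_forall_mem_open.mpr fun _ ⟨U, hU, hzU, hN⟩ =>
    ⟨U, fun _ hy => ⟨U, hU, hy, hN⟩, hU, hzU⟩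

theorem fatouSet_anti {G H : Set (ℂ → ℂ)} (hGH : G ⊆ H) : FatouSet H ⊆ FatouSet G :=
  fun _ ⟨U, hU, hzU, hN⟩ => ⟨U, hU, hzU, hN.mono hGH⟩

theorem iterate_mem_of_comp_mem {G : Set (ℂ → ℂ)} (hG : ∀ f ∈ G, ∀ g ∈ G, f ∘ g ∈ G)
    {g : ℂ → ℂ} (hg : g ∈ G) {n : ℕ} (hn : 0 < n) : g^[n] ∈ G := by
  induction n, hn using Nat.le_induction with
  | base => simpa using hg
  | succ n _ ih => simpa only [Function.iterate_succ] using hG _ ih g hg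

theorem fatouSet_subset_fatouFn {G : Set (ℂ → ℂ)} (hG : ∀ f ∈ G, ∀ g ∈ G, f ∘ g ∈ G)
    {g : ℂ → ℂ} (hg : g ∈ G) : FatouSet G ⊆ FatouFn g :=
  fatouSet_anti fun _ ⟨_, hn, hh⟩ => hh ▸ iterate_mem_of_comp_mem hG hg hn

theorem mem_fatouFn_of_apply_mem {f : ℂ → ℂ} (hf : Continuous f) {x : ℂ} (hx : f x ∈ FatouFn f) :
    x ∈ FatouFn f := by
  obtain ⟨U, hU, hxU, hN⟩ := hx
  refine ⟨f ⁻¹' U, hU.preimage hf, hxU, ((normalOn_singleton f _).union (hN.precomp hf)).mono ?_⟩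
  rintro _ ⟨n, hn, rfl⟩
  obtain ⟨k, rfl⟩ := Nat.exists_eq_add_one_of_ne_zero hn.ne'
  rcases k.eq_zero_or_pos with rfl | hk
  · exact Or.inl (Function.iterate_one f)
  · exact Or.inr ⟨f^[k], ⟨k, hk, rfl⟩, (Function.iterate_succ f k).symm⟩

theorem closure_connectedComponentIn_inter_subset {X : Type*} [TopologicalSpace X]
    [LocallyConnectedSpace X] {P : Set X} (hP : IsOpen P) (x : X) :
    closure (connectedComponentIn P x) ∩ P ⊆ connectedComponentIn P x := by
  rintro y ⟨hycl, hyP⟩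
  obtain ⟨t, hty, htx⟩ := mem_closure_iff.mp hycl _ hP.connectedComponentIn
    (mem_connectedComponentIn hyP)
  rw [connectedComponentIn_eq htx, ← connectedComponentIn_eq hty]
  exact mem_connectedComponentIn hyP

theorem subset_image_connectedComponentIn_preimage {X Y : Type*} [TopologicalSpace X]
    [LocallyConnectedSpace X] [TopologicalSpace Y] [T2Space Y] {f : X → Y} (hf : Continuous f)
    (hfo : IsOpenMap f) {U : Set Y} (hU : IsOpen U) (hUc : IsPreconnected U) {x : X}
    (hx : f x ∈ U) (hW : IsCompact (closure (connectedComponentIn (f ⁻¹' U) x))) :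
    U ⊆ f '' connectedComponentIn (f ⁻¹' U) x := by
  have hP : IsOpen (f ⁻¹' U) := hU.preimage hf
  refine hUc.subset_of_closure_inter_subset (hfo _ hP.connectedComponentIn)
    ⟨f x, hx, mem_image_of_mem f (mem_connectedComponentIn hx)⟩ ?_
  rintro y ⟨hycl, hyU⟩
  obtain ⟨x', hx'W, rfl⟩ :=
    closure_minimal (image_mono subset_closure) (hW.image hf).isClosed hycl
  exact mem_image_of_mem f (closure_connectedComponentIn_inter_subset hP x ⟨hx'W, hyU⟩)

/-- If some `g₀ ∈ G` has all Fatou components bounded, then the Fatou exceptional values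
of `G` lie in the Julia set `J(G)`. -/
theorem fatouExceptional_subset_julia (G : Set (ℂ → ℂ))
    (hGtrans : ∀ f ∈ G, TranscendentalEntire f)
    (hGcomp : ∀ f ∈ G, ∀ g ∈ G, f ∘ g ∈ G)
    (g₀ : ℂ → ℂ) (hg₀ : g₀ ∈ G)
    (hbd : ∀ z ∈ FatouFn g₀, IsBounded (connectedComponentIn (FatouFn g₀) z)) :
    {w : ℂ | {z : ℂ | ∃ g ∈ G, g z = w}.Finite} ⊆ (FatouSet G)ᶜ := by
  intro w hw hwF
  have htrans := hGtrans g₀ hg₀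
  set U := connectedComponentIn (FatouFn g₀) w
  have hwU : w ∈ U := mem_connectedComponentIn (fatouSet_subset_fatouFn hGcomp hg₀ hwF)
  have hU : IsOpen U := (isOpen_fatouSet _).connectedComponentIn
  set P := g₀ ⁻¹' U
  have hPF : P ⊆ FatouFn g₀ := fun x hx =>
    mem_fatouFn_of_apply_mem htrans.1.continuous (connectedComponentIn_subset _ _ hx)
  have hPcomp : ∀ x ∈ P, IsBounded (connectedComponentIn P x) := fun x hx =>
    (hbd x (hPF hx)).subset (connectedComponentIn_mono x hPF)
  have hcover : P ⊆ ⋃ b ∈ g₀ ⁻¹' {w}, connectedComponentIn P b := by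
    intro x hx
    obtain ⟨b, hb, hbw⟩ := subset_image_connectedComponentIn_preimage htrans.1.continuous
      htrans.isOpenMap hU isPreconnected_connectedComponentIn hx (hPcomp x hx).isCompact_closure
      hwU
    exact mem_biUnion hbw (connectedComponentIn_eq hb ▸ mem_connectedComponentIn hx)
  have hfin : (g₀ ⁻¹' {w}).Finite := hw.subset fun b hb => ⟨g₀, hg₀, hb⟩
  refine htrans.not_isBounded_preimage (hU.mem_nhds hwU) ?_
  refine ((isBounded_biUnion hfin).mpr fun b hb => hPcomp b ?_).subset hcover
  exact show g₀ b ∈ U from (mem_singleton_iff.mp hb) ▸ hwU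
end
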